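/- The electromagnetic-like d-field components F^{(1)}_{(i)j} = (1/2)·[g_{js}·N^{(s)}_{(1)i} − g_{is}·N^{(s)}_{(1)j} + (g_{iq}·L^q_{js} − g_{jq}·L^q_{is})·y^s] of the 2D-monolayer Lagrangian satisfy F^{(1)}_{(1)1} = F^{(1)}_{(2)2} = 0 and F^{(1)}_{(2)1} = −F^{(1)}_{(1)2} = (1/2)·[3 m r/2 + (m² e^{−2|V|t/r}/(4p|V|r⁴))·ṙ³]·φ̇, at every point with r > 0, ṙ ≠ 0 and g₁₁ ≠ 0. -/

import Mathlib

/-- The fundamental metrical d-tensor g_{ij} of the 2D-monolayer Lagrangian. -/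
noncomputable def gE (m p V : ℝ) (i j : Fin 2) (t r φ rd φd : ℝ) : ℝ :=
  if i = 0 ∧ j = 0 then (m - 2 * p * r ^ 5 * |V| * Real.exp (2 * |V| * t / r) * (rd ^ 3)⁻¹) / 2
  else if i = 1 ∧ j = 1 then m * r ^ 2 / 2 else 0

/-- The inverse fundamental metric g^{ij}. -/
noncomputable def gI (m p V : ℝ) (i j : Fin 2) (t r φ rd φd : ℝ) : ℝ :=
  if i = 0 ∧ j = 0 then 2 / (m - 2 * p * r ^ 5 * |V| * Real.exp (2 * |V| * t / r) * (rd ^ 3)⁻¹)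
  else if i = 1 ∧ j = 1 then 2 / (m * r ^ 2) else 0

/-- The canonical nonlinear connection components N^{(q)}_{(1)k}. -/
noncomputable def NN (m p V : ℝ) (𝒰 : ℝ → ℝ → ℝ) (q k : Fin 2) (t r φ rd φd : ℝ) : ℝ :=
  if q = 0 then
    if k = 0 then
      -|V| / (2 * r) + (2 * |V| * t / r ^ 2 - 5 / r) * rd - 𝒰 t r * rd ^ 2
        + 3 * m * Real.exp (-(2 * |V| * t) / r) / (4 * p * |V| * r ^ 4) * rd ^ 2 * φd ^ 2
    else m * Real.exp (-(2 * |V| * t) / r) / (2 * p * |V| * r ^ 4) * rd ^ 3 * φd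
  else if k = 0 then φd / r else rd / r

/-- Partial derivative ∂F/∂x^k, with (x¹,x²) = (r,φ). -/
noncomputable def dx (k : Fin 2) (F : ℝ → ℝ → ℝ → ℝ → ℝ → ℝ) (t r φ rd φd : ℝ) : ℝ :=
  if k = 0 then deriv (fun a => F t a φ rd φd) r else deriv (fun a => F t r a rd φd) φ

/-- Partial derivative ∂F/∂y^k, with (y¹,y²) = (ṙ,φ̇). -/
noncomputable def dy (k : Fin 2) (F : ℝ → ℝ → ℝ → ℝ → ℝ → ℝ) (t r φ rd φd : ℝ) : ℝ :=
  if k = 0 then deriv (fun a => F t r φ a φd) rd else deriv (fun a => F t r φ rd a) φd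

/-- Horizontal derivative δF/δx^k = ∂F/∂x^k − N^{(q)}_{(1)k}·∂F/∂y^q. -/
noncomputable def del (m p V : ℝ) (𝒰 : ℝ → ℝ → ℝ) (k : Fin 2)
    (F : ℝ → ℝ → ℝ → ℝ → ℝ → ℝ) (t r φ rd φd : ℝ) : ℝ :=
  dx k F t r φ rd φd - ∑ q : Fin 2, NN m p V 𝒰 q k t r φ rd φd * dy q F t r φ rd φd

/-- Temporal Cartan coefficients G^k_{j1} = (g^{ks}/2)·∂g_{sj}/∂t. -/
noncomputable def Gtime (m p V : ℝ) (k j : Fin 2) (t r φ rd φd : ℝ) : ℝ :=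
  ∑ s : Fin 2, gI m p V k s t r φ rd φd / 2 * deriv (fun a => gE m p V s j a r φ rd φd) t

/-- Vertical Cartan coefficients C^{i(1)}_{j(k)} = (g^{is}/2)·∂g_{js}/∂y^k. -/
noncomputable def Cv (m p V : ℝ) (i j k : Fin 2) (t r φ rd φd : ℝ) : ℝ :=
  ∑ s : Fin 2, gI m p V i s t r φ rd φd / 2 * dy k (gE m p V j s) t r φ rd φd

/-- Spatial Cartan coefficients
L^i_{jk} = (g^{is}/2)·(δg_{js}/δx^k + δg_{ks}/δx^j − δg_{jk}/δx^s). -/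
noncomputable def Lc (m p V : ℝ) (𝒰 : ℝ → ℝ → ℝ) (i j k : Fin 2) (t r φ rd φd : ℝ) : ℝ :=
  ∑ s : Fin 2, gI m p V i s t r φ rd φd / 2 *
    (del m p V 𝒰 k (gE m p V j s) t r φ rd φd + del m p V 𝒰 j (gE m p V k s) t r φ rd φd
      - del m p V 𝒰 s (gE m p V j k) t r φ rd φd)

/-- The electromagnetic-like d-field components
F^{(1)}_{(i)j} = (1/2)[g_{js}N^{(s)}_{(1)i} − g_{is}N^{(s)}_{(1)j} + (g_{iq}L^q_{js} − g_{jq}L^q_{is})y^s]. -/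
noncomputable def Fem (m p V : ℝ) (𝒰 : ℝ → ℝ → ℝ) (i j : Fin 2) (t r φ rd φd : ℝ) : ℝ :=
  1 / 2 * ((∑ s : Fin 2, gE m p V j s t r φ rd φd * NN m p V 𝒰 s i t r φ rd φd)
    - (∑ s : Fin 2, gE m p V i s t r φ rd φd * NN m p V 𝒰 s j t r φ rd φd)
    + ∑ s : Fin 2, (∑ q : Fin 2,
        (gE m p V i q t r φ rd φd * Lc m p V 𝒰 q j s t r φ rd φd
          - gE m p V j q t r φ rd φd * Lc m p V 𝒰 q i s t r φ rd φd))
        * (if s = 0 then rd else φd))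

section DerivLemmas

variable (m p V t r φ rd φd : ℝ)

lemma d00_r (hr : r ≠ 0) (hrd : rd ≠ 0) :
    deriv (fun a => gE m p V 0 0 t a φ rd φd) r
      = -(2 * p * |V| * (rd ^ 3)⁻¹ * Real.exp (2 * |V| * t / r)
          * (5 * r ^ 4 - 2 * |V| * t * r ^ 3)) / 2 := by
  have hfun : (fun a => gE m p V 0 0 t a φ rd φd)
      = fun a => (m - 2 * p * a ^ 5 * |V| * Real.exp (2 * |V| * t / a) * (rd ^ 3)⁻¹) / 2 := by
    funext a; simp [gE]
  rw [hfun]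
  have hq : HasDerivAt (fun a : ℝ => 2 * |V| * t / a) (2 * |V| * t * (-(r ^ 2)⁻¹)) r := by
    simpa [div_eq_mul_inv] using (hasDerivAt_inv hr).const_mul (2 * |V| * t)
  have h5 : HasDerivAt (fun a : ℝ => a ^ 5) (5 * r ^ 4) r := by
    simpa using hasDerivAt_pow 5 r
  have H := (((((h5.const_mul (2 * p)).mul_const |V|).mul hq.exp).mul_const
      ((rd ^ 3)⁻¹)).const_sub m).div_const 2
  rw [(show HasDerivAt (fun a : ℝ => (m - 2 * p * a ^ 5 * |V| * Real.exp (2 * |V| * t / a) * (rd ^ 3)⁻¹) / 2) _ r from H).deriv]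
  generalize Real.exp (2 * |V| * t / r) = E
  field_simp [hr, hrd]
  ring

lemma d00_rd (hrd : rd ≠ 0) :
    deriv (fun a => gE m p V 0 0 t r φ a φd) rd
      = 3 * p * r ^ 5 * |V| * Real.exp (2 * |V| * t / r) * (rd ^ 4)⁻¹ := by
  have hfun : (fun a => gE m p V 0 0 t r φ a φd)
      = fun a => (m - 2 * p * r ^ 5 * |V| * Real.exp (2 * |V| * t / r) * (a ^ 3)⁻¹) / 2 := by
    funext a; simp [gE]
  rw [hfun]
  have h3 : HasDerivAt (fun a : ℝ => a ^ 3) (3 * rd ^ 2) rd := by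
    simpa using hasDerivAt_pow 3 rd
  have hinv := h3.inv (pow_ne_zero 3 hrd)
  have H := ((hinv.const_mul (2 * p * r ^ 5 * |V| * Real.exp (2 * |V| * t / r))).const_sub
      m).div_const 2
  rw [(show HasDerivAt (fun a : ℝ => (m - 2 * p * r ^ 5 * |V| * Real.exp (2 * |V| * t / r) * (a ^ 3)⁻¹) / 2) _ rd from H).deriv]
  generalize Real.exp (2 * |V| * t / r) = E
  field_simp [hrd]

lemma d00_phi : deriv (fun a => gE m p V 0 0 t r a rd φd) φ = 0 := by
  have hfun : (fun a : ℝ => gE m p V 0 0 t r a rd φd)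
      = fun _ => (m - 2 * p * r ^ 5 * |V| * Real.exp (2 * |V| * t / r) * (rd ^ 3)⁻¹) / 2 := by
    funext a; simp [gE]
  rw [hfun, deriv_const]

lemma d00_phid : deriv (fun a => gE m p V 0 0 t r φ rd a) φd = 0 := by
  have hfun : (fun a : ℝ => gE m p V 0 0 t r φ rd a)
      = fun _ => (m - 2 * p * r ^ 5 * |V| * Real.exp (2 * |V| * t / r) * (rd ^ 3)⁻¹) / 2 := by
    funext a; simp [gE]
  rw [hfun, deriv_const]

lemma d11_r : deriv (fun a => gE m p V 1 1 t a φ rd φd) r = m * r := by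
  have hfun : (fun a => gE m p V 1 1 t a φ rd φd) = fun a => m * a ^ 2 / 2 := by
    funext a; simp [gE]
  rw [hfun]
  have h2 : HasDerivAt (fun a : ℝ => a ^ 2) (2 * r) r := by simpa using hasDerivAt_pow 2 r
  have := ((h2.const_mul m).div_const 2).deriv
  rw [this]; ring

lemma d11_phi : deriv (fun a => gE m p V 1 1 t r a rd φd) φ = 0 := by
  have hfun : (fun a : ℝ => gE m p V 1 1 t r a rd φd) = fun _ => m * r ^ 2 / 2 := by
    funext a; simp [gE]
  rw [hfun, deriv_const]

lemma d11_rd : deriv (fun a => gE m p V 1 1 t r φ a φd) rd = 0 := by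
  have hfun : (fun a : ℝ => gE m p V 1 1 t r φ a φd) = fun _ => m * r ^ 2 / 2 := by
    funext a; simp [gE]
  rw [hfun, deriv_const]

lemma d11_phid : deriv (fun a => gE m p V 1 1 t r φ rd a) φd = 0 := by
  have hfun : (fun a : ℝ => gE m p V 1 1 t r φ rd a) = fun _ => m * r ^ 2 / 2 := by
    funext a; simp [gE]
  rw [hfun, deriv_const]

lemma d01_r : deriv (fun a => gE m p V 0 1 t a φ rd φd) r = 0 := by
  have hfun : (fun a => gE m p V 0 1 t a φ rd φd) = fun _ => (0:ℝ) := by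
    funext a; simp [gE]
  rw [hfun, deriv_const]

lemma d01_phi : deriv (fun a => gE m p V 0 1 t r a rd φd) φ = 0 := by
  have hfun : (fun a : ℝ => gE m p V 0 1 t r a rd φd) = fun _ => (0:ℝ) := by
    funext a; simp [gE]
  rw [hfun, deriv_const]

lemma d01_rd : deriv (fun a => gE m p V 0 1 t r φ a φd) rd = 0 := by
  have hfun : (fun a : ℝ => gE m p V 0 1 t r φ a φd) = fun _ => (0:ℝ) := by
    funext a; simp [gE]
  rw [hfun, deriv_const]

lemma d01_phid : deriv (fun a => gE m p V 0 1 t r φ rd a) φd = 0 := by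
  have hfun : (fun a : ℝ => gE m p V 0 1 t r φ rd a) = fun _ => (0:ℝ) := by
    funext a; simp [gE]
  rw [hfun, deriv_const]

lemma d10_r : deriv (fun a => gE m p V 1 0 t a φ rd φd) r = 0 := by
  have hfun : (fun a => gE m p V 1 0 t a φ rd φd) = fun _ => (0:ℝ) := by
    funext a; simp [gE]
  rw [hfun, deriv_const]

lemma d10_phi : deriv (fun a => gE m p V 1 0 t r a rd φd) φ = 0 := by
  have hfun : (fun a : ℝ => gE m p V 1 0 t r a rd φd) = fun _ => (0:ℝ) := by
    funext a; simp [gE]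
  rw [hfun, deriv_const]

lemma d10_rd : deriv (fun a => gE m p V 1 0 t r φ a φd) rd = 0 := by
  have hfun : (fun a : ℝ => gE m p V 1 0 t r φ a φd) = fun _ => (0:ℝ) := by
    funext a; simp [gE]
  rw [hfun, deriv_const]

lemma d10_phid : deriv (fun a => gE m p V 1 0 t r φ rd a) φd = 0 := by
  have hfun : (fun a : ℝ => gE m p V 1 0 t r φ rd a) = fun _ => (0:ℝ) := by
    funext a; simp [gE]
  rw [hfun, deriv_const]


end DerivLemmas

lemma Fem_antisymm (m p V : ℝ) (𝒰 : ℝ → ℝ → ℝ) (i j : Fin 2) (t r φ rd φd : ℝ) :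
    Fem m p V 𝒰 i j t r φ rd φd = -Fem m p V 𝒰 j i t r φ rd φd := by
  simp only [Fem, Fin.sum_univ_two]
  ring

set_option maxHeartbeats 2000000 in
lemma Fem10 (m p V : ℝ) (hm : 0 < m) (hp : 0 < p) (hV : V ≠ 0)
    (𝒰 : ℝ → ℝ → ℝ)
    (t r φ rd φd : ℝ) (hr : 0 < r) (hrd : rd ≠ 0)
    (hg11 : (m - 2 * p * r ^ 5 * |V| * Real.exp (2 * |V| * t / r) * (rd ^ 3)⁻¹) / 2 ≠ 0) :
    Fem m p V 𝒰 1 0 t r φ rd φd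
        = 1 / 2 * (3 * m * r / 2
            + m ^ 2 * Real.exp (-(2 * |V| * t) / r) / (4 * p * |V| * r ^ 4) * rd ^ 3) * φd := by
  have hr' : r ≠ 0 := ne_of_gt hr
  have hm' : m ≠ 0 := ne_of_gt hm
  have hp' : p ≠ 0 := ne_of_gt hp
  have habs : |V| ≠ 0 := abs_ne_zero.mpr hV
  have hD : m - 2 * p * r ^ 5 * |V| * Real.exp (2 * |V| * t / r) * (rd ^ 3)⁻¹ ≠ 0 := by
    intro h; exact hg11 (by rw [h]; norm_num)
  simp only [Fem, Lc, del, dx, dy, Fin.sum_univ_two]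
  norm_num
  rw [d00_r m p V t r φ rd φd hr' hrd, d00_rd m p V t r φ rd φd hrd,
    d00_phi, d00_phid, d11_r, d11_phi, d11_rd, d11_phid,
    d01_r, d01_phi, d01_rd, d01_phid, d10_r, d10_phi, d10_rd, d10_phid]
  simp only [NN, gI, gE]
  norm_num
  rw [neg_div, Real.exp_neg]
  have hE := Real.exp_ne_zero (2 * |V| * t / r)
  generalize Real.exp (2 * |V| * t / r) = E at hD hE ⊢
  have h1 : m * rd ^ 3 - 2 * p * r ^ 5 * |V| * E ≠ 0 := by
    intro h
    apply hD
    have h3 : (rd : ℝ) ^ 3 ≠ 0 := pow_ne_zero _ hrd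
    field_simp
    linarith
  field_simp [h1]
  ring

/-- the electromagnetic-like d-field of the 2D-monolayer Lagrangian. -/
theorem stmt14 (m p V : ℝ) (hm : 0 < m) (hp : 0 < p) (hV : V ≠ 0)
    (𝒰 : ℝ → ℝ → ℝ) (h𝒰 : ContDiff ℝ 1 (Function.uncurry 𝒰))
    (t r φ rd φd : ℝ) (hr : 0 < r) (hrd : rd ≠ 0)
    (hg11 : (m - 2 * p * r ^ 5 * |V| * Real.exp (2 * |V| * t / r) * (rd ^ 3)⁻¹) / 2 ≠ 0) :
    Fem m p V 𝒰 0 0 t r φ rd φd = 0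
      ∧ Fem m p V 𝒰 1 1 t r φ rd φd = 0
      ∧ Fem m p V 𝒰 1 0 t r φ rd φd
        = 1 / 2 * (3 * m * r / 2
            + m ^ 2 * Real.exp (-(2 * |V| * t) / r) / (4 * p * |V| * r ^ 4) * rd ^ 3) * φd
      ∧ Fem m p V 𝒰 0 1 t r φ rd φd
        = -(1 / 2 * (3 * m * r / 2
            + m ^ 2 * Real.exp (-(2 * |V| * t) / r) / (4 * p * |V| * r ^ 4) * rd ^ 3) * φd) := by
  have h1 : Fem m p V 𝒰 0 0 t r φ rd φd = 0 := by
    have := Fem_antisymm m p V 𝒰 0 0 t r φ rd φd; linarith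
  have h2 : Fem m p V 𝒰 1 1 t r φ rd φd = 0 := by
    have := Fem_antisymm m p V 𝒰 1 1 t r φ rd φd; linarith
  have h3 := Fem10 m p V hm hp hV 𝒰 t r φ rd φd hr hrd hg11
  exact ⟨h1, h2, h3, by rw [Fem_antisymm, h3]⟩
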